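/- Let X be a metric space, H₀ and H real Hilbert spaces, Φ : X → H₀ a bounded Borel-measurable map such that the kernel mean embedding Π is injective (characteristic kernel) and its image S = Π(P(X)) is compact, and let U ⊆ H be compact. For each M ≥ 1 let ℓ_M : X^M × U → ℝ satisfy: (1) ℓ_M(σ·x, u) = ℓ_M(x, u) for every permutation σ of {1,…,M}, every x ∈ X^M and u ∈ U; (2) there is B ≥ 0, independent of M, with |ℓ_M(x,u)| ≤ B for all x ∈ X^M, u ∈ U; (3) there is L ≥ 0, independent of M, with |ℓ_M(x,u) − ℓ_M(x',u')| ≤ L·(‖Π̂(x) − Π̂(x')‖ + ‖u − u'‖) for all x, x' ∈ X^M and u, u' ∈ U. Then there exist a strictly increasing sequence of indices (M_p)_p and a function Λ : S × U → ℝ with |Λ(s,u) − Λ(s',u')| ≤ L·(‖s − s'‖ + ‖u − u'‖) for all s, s' ∈ S and u, u' ∈ U, such that lim_{p→∞} sup_{x ∈ X^{M_p}, u ∈ U} |ℓ_{M_p}(x,u) − Λ(Π̂(x), u)| = 0. -/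

import Mathlib

open MeasureTheory

/-- The empirical embedding `Π̂(x) = (1/M) ∑ m, Φ (x m)` of a tuple `x ∈ X^M`. -/
noncomputable def empEmbed {X H₀ : Type*} [AddCommMonoid H₀] [Module ℝ H₀]
    (Φ : X → H₀) {M : ℕ} (x : Fin M → X) : H₀ :=
  (M : ℝ)⁻¹ • ∑ m : Fin M, Φ (x m)

/-- The image `S = Π(P(X))` of the set of all Borel probability measures on `X`
under the kernel mean embedding `Π(μ) = ∫ x, Φ x ∂μ`. -/
def kmeImage {X : Type*} [MeasurableSpace X] {H₀ : Type*} [NormedAddCommGroup H₀]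
    [NormedSpace ℝ H₀] (Φ : X → H₀) : Set H₀ :=
  {h : H₀ | ∃ μ : Measure X, IsProbabilityMeasure μ ∧ h = ∫ x, Φ x ∂μ}

/-! Each `ℓ_M` factors through `(x, u) ↦ (Π̂ x, u)` as an `L`-Lipschitz function for the
ℓ¹ metric on `H₀ × H`. A McShane extension, truncated at `±B`, turns it into a function on
the whole space that is bounded by `B` and `L`-Lipschitz, uniformly in `M`. Empirical
embeddings are embeddings of empirical measures, so they lie in `S`; by Arzelà–Ascoli on the
compact set `S × U` a subsequence of these extensions converges uniformly there, and its
limit is `Λ`. -/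

open Set Filter
open scoped NNReal ENNReal BoundedContinuousFunction

section EmpiricalMeasure

variable {X : Type*} [MeasurableSpace X] {M : ℕ}

noncomputable def empiricalMeasure (x : Fin M → X) : Measure X :=
  (M : ℝ≥0∞)⁻¹ • ∑ m, Measure.dirac (x m)

instance isProbabilityMeasure_empiricalMeasure [NeZero M] (x : Fin M → X) :
    IsProbabilityMeasure (empiricalMeasure x) := by
  constructor
  simpa [empiricalMeasure] using
    ENNReal.inv_mul_cancel (Nat.cast_ne_zero.2 (NeZero.ne M)) (ENNReal.natCast_ne_top M)

variable {H₀ : Type*} [NormedAddCommGroup H₀] [NormedSpace ℝ H₀] [CompleteSpace H₀]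
  {Φ : X → H₀}

theorem integral_empiricalMeasure (hΦ : StronglyMeasurable Φ) (x : Fin M → X) :
    ∫ y, Φ y ∂empiricalMeasure x = empEmbed Φ x := by
  have hint (m : Fin M) : Integrable Φ (Measure.dirac (x m)) :=
    integrable_dirac' hΦ enorm_lt_top
  simp [empiricalMeasure, empEmbed, integral_smul_measure,
    integral_finsetSum_measure fun m _ => hint m, integral_dirac' Φ _ hΦ]

theorem empEmbed_mem_kmeImage (hΦ : StronglyMeasurable Φ) [NeZero M] (x : Fin M → X) :
    empEmbed Φ x ∈ kmeImage Φ :=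
  ⟨empiricalMeasure x, inferInstance, (integral_empiricalMeasure hΦ x).symm⟩

end EmpiricalMeasure

theorem exists_lipschitzWith_factorization {Y α : Type*} [PseudoMetricSpace α] {e : Y → α}
    {f : Y → ℝ} {s : Set Y} {K : ℝ≥0}
    (hf : ∀ y ∈ s, ∀ y' ∈ s, dist (f y) (f y') ≤ K * dist (e y) (e y')) :
    ∃ F : α → ℝ, LipschitzWith K F ∧ ∀ y ∈ s, F (e y) = f y := by
  classical
  set f' : α → ℝ := fun z => if h : ∃ y ∈ s, e y = z then f h.choose else 0
  -- `hf` makes `f` constant on the fibres of `e`, so the chosen preimage does not matter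
  have hf' : ∀ y ∈ s, f' (e y) = f y := by
    intro y hy
    have h : ∃ y' ∈ s, e y' = e y := ⟨y, hy, rfl⟩
    obtain ⟨hs, he⟩ := h.choose_spec
    simpa [f', h, he] using hf _ hs y hy
  obtain ⟨F, hF, hFf'⟩ := LipschitzOnWith.extend_real (f := f') (s := e '' s) (K := K) <| by
    refine LipschitzOnWith.of_dist_le_mul ?_
    rintro _ ⟨y, hy, rfl⟩ _ ⟨y', hy', rfl⟩
    rw [hf' y hy, hf' y' hy']
    exact hf y hy y' hy'
  exact ⟨F, hF, fun y hy => (hFf' (mem_image_of_mem e hy)).symm.trans (hf' y hy)⟩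

theorem exists_lipschitzWith_abs_le_factorization {Y α : Type*} [PseudoMetricSpace α] {e : Y → α}
    {f : Y → ℝ} {s : Set Y} {K : ℝ≥0} {B : ℝ} (hB : 0 ≤ B) (hfB : ∀ y ∈ s, |f y| ≤ B)
    (hf : ∀ y ∈ s, ∀ y' ∈ s, dist (f y) (f y') ≤ K * dist (e y) (e y')) :
    ∃ F : α → ℝ, LipschitzWith K F ∧ (∀ z, |F z| ≤ B) ∧ ∀ y ∈ s, F (e y) = f y := by
  obtain ⟨F, hF, hFf⟩ := exists_lipschitzWith_factorization hf
  refine ⟨fun z => max (-B) (min (F z) B), (hF.min_const B).const_max (-B), fun z => ?_,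
    fun y hy => ?_⟩
  · exact abs_le.2 ⟨le_max_left _ _, max_le (by linarith) (min_le_right _ _)⟩
  · obtain ⟨h₁, h₂⟩ := abs_le.1 (hfB y hy)
    simp [hFf y hy, h₁, h₂]

theorem IsCompact.exists_tendstoUniformlyOn_subseq_of_lipschitzOnWith {α : Type*}
    [PseudoMetricSpace α] {s : Set α} (hs : IsCompact s) {K : ℝ≥0} {R : ℝ} {f : ℕ → α → ℝ}
    (hf : ∀ n, LipschitzOnWith K (f n) s) (hR : ∀ n, ∀ x ∈ s, |f n x| ≤ R) :
    ∃ φ : ℕ → ℕ, StrictMono φ ∧ ∃ g : α → ℝ,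
      LipschitzOnWith K g s ∧ TendstoUniformlyOn (fun n => f (φ n)) g atTop s := by
  have : CompactSpace s := isCompact_iff_compactSpace.mp hs
  set A : Set (s →ᵇ ℝ) := {G | LipschitzWith K G ∧ ∀ x, G x ∈ Icc (-R) R}
  have hA : IsCompact A := by
    refine BoundedContinuousFunction.arzela_ascoli₂ (Icc (-R) R) isCompact_Icc A ?_
      (fun G x hG => hG.2 x) ?_
    · have hlip : IsClosed {G : s → ℝ | LipschitzWith K G} := isClosed_setOfPred_lipschitzWith K
      have hIcc : IsClosed {G : s → ℝ | ∀ x, G x ∈ Icc (-R) R} :=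
        ofPred_forall (fun x (G : s → ℝ) => G x ∈ Icc (-R) R) ▸
          isClosed_iInter fun x => isClosed_Icc.preimage (continuous_apply x)
      exact (hlip.inter hIcc).preimage BoundedContinuousFunction.continuous_coe
    · exact (LipschitzWith.uniformEquicontinuous _ K fun G => G.2.1).equicontinuous
  set F : ℕ → s →ᵇ ℝ := fun n =>
    BoundedContinuousFunction.mkOfCompact ⟨s.domRestrict (f n), (hf n).to_restrict.continuous⟩
  have hFA (n : ℕ) : F n ∈ A := ⟨(hf n).to_restrict, fun x => abs_le.1 (hR n x x.2)⟩
  obtain ⟨G, hGA, φ, hφ, hFG⟩ := hA.tendsto_subseq hFA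
  have hG : s.domRestrict (Function.extend Subtype.val G 0) = G :=
    funext fun x => Subtype.val_injective.extend_apply G 0 x
  refine ⟨φ, hφ, Function.extend Subtype.val G 0, ?_, ?_⟩
  · rw [lipschitzOnWith_iff_restrict, hG]
    exact hGA.1
  · rw [tendstoUniformlyOn_iff_tendstoUniformly_comp_coe,
      show Function.extend Subtype.val G 0 ∘ Subtype.val = G from hG]
    exact BoundedContinuousFunction.tendsto_iff_tendstoUniformly.1 hFG

theorem mfl_stage_costs_general
    {X : Type*} [MeasurableSpace X]
    {H₀ : Type*} [NormedAddCommGroup H₀] [InnerProductSpace ℝ H₀] [CompleteSpace H₀]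
    {H : Type*} [NormedAddCommGroup H]
    (Φ : X → H₀) (hΦmeas : StronglyMeasurable Φ)
    -- the image of the kernel mean embedding is compact
    (hScpt : IsCompact (kmeImage Φ))
    (U : Set H) (hUcpt : IsCompact U)
    (ℓ : (M : ℕ) → (Fin M → X) → H → ℝ)
    -- (2) uniform boundedness
    (B : ℝ) (hB : 0 ≤ B)
    (hbdd : ∀ M : ℕ, 1 ≤ M → ∀ x : Fin M → X, ∀ u ∈ U, |ℓ M x u| ≤ B)
    -- (3) uniform Lipschitz continuity
    (L : ℝ) (hL : 0 ≤ L)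
    (hlip : ∀ M : ℕ, 1 ≤ M → ∀ x x' : Fin M → X, ∀ u ∈ U, ∀ u' ∈ U,
      |ℓ M x u - ℓ M x' u'| ≤
        L * (‖empEmbed Φ x - empEmbed Φ x'‖ + ‖u - u'‖)) :
    ∃ Msub : ℕ → ℕ, StrictMono Msub ∧ (∀ p : ℕ, 1 ≤ Msub p) ∧
      ∃ Λ : H₀ → H → ℝ,
        (∀ s ∈ kmeImage Φ, ∀ s' ∈ kmeImage Φ, ∀ u ∈ U, ∀ u' ∈ U,
          |Λ s u - Λ s' u'| ≤ L * (‖s - s'‖ + ‖u - u'‖)) ∧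
        (∀ ε : ℝ, 0 < ε → ∃ N : ℕ, ∀ p : ℕ, N ≤ p → ∀ x : Fin (Msub p) → X, ∀ u ∈ U,
          |ℓ (Msub p) x u - Λ (empEmbed Φ x) u| ≤ ε) := by
  lift L to ℝ≥0 using hL
  -- the Lipschitz conditions are stated for the ℓ¹ product metric on `H₀ × H`
  set ι : H₀ → H → WithLp 1 (H₀ × H) := fun s u => WithLp.toLp 1 (s, u)
  have hdist (s s' : H₀) (u u' : H) : dist (ι s u) (ι s' u') = ‖s - s'‖ + ‖u - u'‖ := by
    rw [WithLp.prod_dist_eq_of_L1, dist_eq_norm, dist_eq_norm]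
    rfl
  set C := (fun z : H₀ × H => ι z.1 z.2) '' (kmeImage Φ ×ˢ U)
  have hC : IsCompact C := (hScpt.prod hUcpt).image (WithLp.prod_continuous_toLp 1 H₀ H)
  have hext (n : ℕ) : ∃ F : WithLp 1 (H₀ × H) → ℝ, LipschitzWith L F ∧ (∀ z, |F z| ≤ B) ∧
      ∀ y ∈ (univ : Set (Fin (n + 1) → X)) ×ˢ U,
        F (ι (empEmbed Φ y.1) y.2) = ℓ (n + 1) y.1 y.2 := by
    refine exists_lipschitzWith_abs_le_factorization hB (fun y hy => hbdd _ n.succ_pos _ _ hy.2)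
      fun y hy y' hy' => ?_
    rw [Real.dist_eq, hdist]
    exact hlip _ n.succ_pos _ _ _ hy.2 _ hy'.2
  choose F hFlip hFB hFℓ using hext
  obtain ⟨φ, hφ, g, hg, hFg⟩ := hC.exists_tendstoUniformlyOn_subseq_of_lipschitzOnWith
    (fun n => (hFlip n).lipschitzOnWith) (fun n z _ => hFB n z)
  have hmemC {s : H₀} {u : H} (hs : s ∈ kmeImage Φ) (hu : u ∈ U) : ι s u ∈ C :=
    mem_image_of_mem (fun z : H₀ × H => ι z.1 z.2) (mk_mem_prod hs hu)
  refine ⟨fun p => φ p + 1, fun p q hpq => Nat.succ_lt_succ (hφ hpq), fun p => le_add_self,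
    fun s u => g (ι s u), fun s hs s' hs' u hu u' hu' => ?_, fun ε hε => ?_⟩
  · simpa only [Real.dist_eq, hdist] using hg.dist_le_mul _ (hmemC hs hu) _ (hmemC hs' hu')
  · obtain ⟨N, hN⟩ := eventually_atTop.1 (Metric.tendstoUniformlyOn_iff.1 hFg ε hε)
    refine ⟨N, fun p hp x u hu => ?_⟩
    have h := hN p hp _ (hmemC (empEmbed_mem_kmeImage hΦmeas x) hu)
    rw [hFℓ (φ p) (x, u) ⟨mem_univ x, hu⟩, Real.dist_eq, abs_sub_comm] at h
    exact h.le

/-- Mean field limit existence for stage costs: permutation-invariant, uniformly bounded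
and uniformly Lipschitz functions `ℓ_M : X^M × U → ℝ` admit a subsequence `M_p` and a
Lipschitz limit function `Λ : S × U → ℝ` with
`sup_{x ∈ X^{M_p}, u ∈ U} |ℓ_{M_p}(x,u) - Λ(Π̂(x),u)| → 0`. -/
theorem mfl_stage_costs
    {X : Type*} [MetricSpace X] [MeasurableSpace X] [BorelSpace X]
    {H₀ : Type*} [NormedAddCommGroup H₀] [InnerProductSpace ℝ H₀] [CompleteSpace H₀]
    {H : Type*} [NormedAddCommGroup H] [InnerProductSpace ℝ H] [CompleteSpace H]
    (Φ : X → H₀) (hΦmeas : StronglyMeasurable Φ) (hΦbdd : ∃ C : ℝ, ∀ x : X, ‖Φ x‖ ≤ C)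
    -- the kernel is characteristic: the kernel mean embedding is injective
    (hinj : ∀ μ ν : Measure X, IsProbabilityMeasure μ → IsProbabilityMeasure ν →
      (∫ y, Φ y ∂μ) = (∫ y, Φ y ∂ν) → μ = ν)
    -- the image of the kernel mean embedding is compact
    (hScpt : IsCompact (kmeImage Φ))
    (U : Set H) (hUcpt : IsCompact U)
    (ℓ : (M : ℕ) → (Fin M → X) → H → ℝ)
    -- (1) permutation invariance in the state variable
    (hperm : ∀ M : ℕ, 1 ≤ M → ∀ σ : Equiv.Perm (Fin M), ∀ x : Fin M → X, ∀ u ∈ U,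
      ℓ M (x ∘ σ) u = ℓ M x u)
    -- (2) uniform boundedness
    (B : ℝ) (hB : 0 ≤ B)
    (hbdd : ∀ M : ℕ, 1 ≤ M → ∀ x : Fin M → X, ∀ u ∈ U, |ℓ M x u| ≤ B)
    -- (3) uniform Lipschitz continuity
    (L : ℝ) (hL : 0 ≤ L)
    (hlip : ∀ M : ℕ, 1 ≤ M → ∀ x x' : Fin M → X, ∀ u ∈ U, ∀ u' ∈ U,
      |ℓ M x u - ℓ M x' u'| ≤
        L * (‖empEmbed Φ x - empEmbed Φ x'‖ + ‖u - u'‖)) :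
    ∃ Msub : ℕ → ℕ, StrictMono Msub ∧ (∀ p : ℕ, 1 ≤ Msub p) ∧
      ∃ Λ : H₀ → H → ℝ,
        (∀ s ∈ kmeImage Φ, ∀ s' ∈ kmeImage Φ, ∀ u ∈ U, ∀ u' ∈ U,
          |Λ s u - Λ s' u'| ≤ L * (‖s - s'‖ + ‖u - u'‖)) ∧
        (∀ ε : ℝ, 0 < ε → ∃ N : ℕ, ∀ p : ℕ, N ≤ p → ∀ x : Fin (Msub p) → X, ∀ u ∈ U,
          |ℓ (Msub p) x u - Λ (empEmbed Φ x) u| ≤ ε) :=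
  mfl_stage_costs_general Φ hΦmeas hScpt U hUcpt ℓ B hB hbdd L hL hlip
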